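/- arXiv:1806.02718 — 9 statements merged into one kernel-verified Lean document; each statement's English description precedes it below -/
import Mathlib

section
/- For any two finite words x and y over a finite alphabet Σ, x = y if and only if the set of minimal absent words of x equals the set of minimal absent words of y. -/
/-- `w` is a minimal absent word of the word `x`: it is not a factor of `x`,
but all its proper factors are factors of `x`. -/
def IsMAW {α : Type*} (x w : List α) : Prop :=
  ¬ w <:+: x ∧ ∀ v : List α, v <:+: w → v ≠ w → v <:+: x

lemma maw_factor {α : Type*} {x y : List α}
    (h : {w : List α | IsMAW x w} = {w : List α | IsMAW y w}) :
    ∀ w : List α, w <:+: x → w <:+: y := by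
  have key : ∀ n, ∀ w : List α, w.length = n → w <:+: x → w <:+: y := by
    intro n
    induction n using Nat.strong_induction_on with
    | _ n ih =>
      intro w hw hwx
      by_contra hwy
      have hm : IsMAW y w := by
        refine ⟨hwy, fun v hv hne => ?_⟩
        have hlt : v.length < w.length := by
          refine lt_of_le_of_ne hv.length_le fun he => hne (hv.eq_of_length he)
        exact ih v.length (hw ▸ hlt) v rfl (hv.trans hwx)
      have hmx : IsMAW x w := by
        have : w ∈ {w : List α | IsMAW y w} := hm
        rw [← h] at this
        exact this
      exact hmx.1 hwx
  exact fun w => key w.length w rfl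

/-- over a finite alphabet, `x = y` iff `M_x = M_y`. -/
theorem maw_bijection {α : Type*} [Fintype α] (x y : List α) :
    x = y ↔ {w : List α | IsMAW x w} = {w : List α | IsMAW y w} := by
  constructor
  · rintro rfl; rfl
  · intro h
    have h1 : x <:+: y := maw_factor h x List.infix_rfl
    have h2 : y <:+: x := maw_factor h.symm y List.infix_rfl
    exact h1.eq_of_length (le_antisymm h1.length_le h2.length_le)
end

section
/- For a word x of length n over an alphabet whose letters all occur in x, every minimal absent word of x has length between 2 and n+1, and some minimal absent word has length n+1 if and only if x = a^n for some letter a. -/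
private lemma rep_of_cons_eq {α : Type*} :
    ∀ (x : List α) (a b : α), a :: x = x ++ [b] → x = List.replicate x.length a := by
  intro x
  induction x with
  | nil => intro a b h; simp
  | cons c xs ih =>
    intro a b h
    simp only [List.cons_append, List.cons.injEq] at h
    obtain ⟨rfl, h2⟩ := h
    have hxs := ih a b h2
    rw [List.length_cons, List.replicate_succ]
    exact congrArg (a :: ·) hxs

/-- if every letter of the alphabet occurs in `x`, then every
minimal absent word of `x` has length between `2` and `|x| + 1`, and a minimal
absent word of length `|x| + 1` exists iff `x` is a power of a single letter. -/
theorem maw_length_bounds {α : Type*} (x : List α) (hcov : ∀ a : α, a ∈ x) :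
    (∀ w : List α, IsMAW x w → 2 ≤ w.length ∧ w.length ≤ x.length + 1) ∧
    ((∃ w : List α, IsMAW x w ∧ w.length = x.length + 1) ↔
      ∃ a : α, x = List.replicate x.length a) := by
  constructor
  · rintro w ⟨hnin, hmin⟩
    have hne : w ≠ [] := by rintro rfl; exact hnin (List.nil_infix)
    have hpos : 0 < w.length := List.length_pos_iff.mpr hne
    have h2 : 2 ≤ w.length := by
      rcases w with _ | ⟨a, _ | ⟨b, l⟩⟩
      · exact absurd rfl hne
      · exfalso
        obtain ⟨s, t, hst⟩ := List.append_of_mem (hcov a)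
        exact hnin ⟨s, t, by simp [hst]⟩
      · simp
    refine ⟨h2, ?_⟩
    have hdrop : w.dropLast <:+: x := by
      apply hmin _ (List.dropLast_prefix w).isInfix
      intro h
      have hl := congrArg List.length h
      rw [List.length_dropLast] at hl
      omega
    have hle := hdrop.length_le
    rw [List.length_dropLast] at hle
    omega
  constructor
  · rintro ⟨w, ⟨hnin, hmin⟩, hlen⟩
    have hne : w ≠ [] := by intro h; rw [h] at hlen; simp at hlen
    have htail : w.tail = x := by
      have hinf : w.tail <:+: x := by
        apply hmin _ (List.tail_suffix w).isInfix
        intro h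
        have hl := congrArg List.length h
        rw [List.length_tail] at hl
        omega
      exact hinf.sublist.eq_of_length (by rw [List.length_tail]; omega)
    have hdrop : w.dropLast = x := by
      have hinf : w.dropLast <:+: x := by
        apply hmin _ (List.dropLast_prefix w).isInfix
        intro h
        have hl := congrArg List.length h
        rw [List.length_dropLast] at hl
        omega
      exact hinf.sublist.eq_of_length (by rw [List.length_dropLast]; omega)
    have h1 : w.head hne :: x = x ++ [w.getLast hne] := by
      calc w.head hne :: x = w := by rw [← htail, List.cons_head_tail]
        _ = x ++ [w.getLast hne] := by
            rw [← hdrop]; exact (List.dropLast_append_getLast hne).symm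
    exact ⟨w.head hne, rep_of_cons_eq x _ _ h1⟩
  · rintro ⟨a, hx⟩
    rcases Nat.eq_zero_or_pos x.length with h0 | hposx
    · exfalso
      have := hcov a
      rw [List.length_eq_zero_iff.mp h0] at this
      simp at this
    · refine ⟨List.replicate (x.length + 1) a, ⟨?_, ?_⟩, by simp⟩
      · intro h
        have := h.length_le
        simp at this
      · intro v hv hvne
        have hva : v = List.replicate v.length a := by
          refine List.eq_replicate_iff.mpr ⟨rfl, ?_⟩
          intro b hb
          exact List.eq_of_mem_replicate (hv.sublist.subset hb)
        have hvl : v.length ≤ x.length := by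
          have hle := hv.length_le
          simp at hle
          rcases Nat.lt_or_ge v.length (x.length + 1) with h | h
          · omega
          · exfalso; apply hvne; rw [hva]; congr 1; omega
        rw [hva, hx]
        exact ⟨[], List.replicate (x.length - v.length) a, by
          rw [List.nil_append, ← List.replicate_add]; congr 1; omega⟩
end

section
/- The function LW(x,y) = Σ_{w ∈ M_x △ M_y} 1/|w|² is a metric on the set of finite words over Σ, i.e., it is nonnegative, symmetric, satisfies LW(x,y)=0 iff x=y, and satisfies the triangle inequality. -/
/-- The length-weighted index `LW(x,y) = ∑_{w ∈ M_x △ M_y} 1/|w|²`. -/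
noncomputable def LW {α : Type*} (x y : List α) : ℝ :=
  ∑' w : (symmDiff {w : List α | IsMAW x w} {w : List α | IsMAW y w} : Set (List α)),
    (1 : ℝ) / ((w : List α).length : ℝ) ^ 2

namespace LWaux

variable {α : Type*}

lemma maw_ne_nil {x w : List α} (h : IsMAW x w) : w ≠ [] := by
  rintro rfl; exact h.1 ((List.nil_infix : ([]:List α) <:+: x))

lemma maw_length {x w : List α} (h : IsMAW x w) : w.length ≤ x.length + 1 := by
  by_contra hlen
  push_neg at hlen
  set v := w.take (x.length + 1) with hv
  have hvw : v <:+: w := (List.take_prefix _ _).isInfix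
  have hvlen : v.length = x.length + 1 := by
    simp [hv, List.length_take]; omega
  have hne : v ≠ w := by
    intro he; rw [he] at hvlen; omega
  have := (h.2 v hvw hne).length_le
  omega

lemma maw_finite [Fintype α] (x : List α) : {w : List α | IsMAW x w}.Finite := by
  apply (List.finite_length_le α (x.length + 1)).subset
  intro w hw
  exact maw_length hw

lemma infix_of_forall {x : List α} :
    ∀ n (w : List α), w.length ≤ n → (∀ v, v <:+: w → ¬ IsMAW x v) → w <:+: x := by
  intro n
  induction n with
  | zero =>
    intro w hw _
    have : w = [] := List.length_eq_zero_iff.mp (Nat.le_zero.mp hw)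
    rw [this]; exact List.nil_infix
  | succ n ih =>
    intro w hw h
    by_cases hx : w <:+: x
    · exact hx
    by_cases hall : ∀ v, v <:+: w → v ≠ w → v <:+: x
    · exact absurd ⟨hx, hall⟩ (h w (List.infix_refl w))
    · push_neg at hall
      obtain ⟨v, hvw, hne, hvx⟩ := hall
      have hlt : v.length < w.length :=
        lt_of_le_of_ne hvw.length_le (fun hl => hne (hvw.eq_of_length hl))
      exact absurd (ih v (by omega) (fun u hu => h u (hu.trans hvw))) hvx

lemma infix_iff_maw (x w : List α) :
    w <:+: x ↔ ∀ v, v <:+: w → ¬ IsMAW x v := by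
  constructor
  · intro hwx v hvw hmaw
    exact hmaw.1 (hvw.trans hwx)
  · intro h
    exact infix_of_forall w.length w le_rfl h

lemma eq_of_maw_eq {x y : List α}
    (h : {w : List α | IsMAW x w} = {w : List α | IsMAW y w}) : x = y := by
  have hm : ∀ v : List α, IsMAW x v ↔ IsMAW y v := fun v => by
    constructor <;> intro hv
    · exact (Set.ext_iff.mp h v).mp hv
    · exact (Set.ext_iff.mp h v).mpr hv
  have hiff : ∀ w : List α, w <:+: x ↔ w <:+: y := by
    intro w
    rw [infix_iff_maw, infix_iff_maw]
    constructor <;> intro hh v hv hmaw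
    · exact hh v hv ((hm v).mpr hmaw)
    · exact hh v hv ((hm v).mp hmaw)
  have h1 : x <:+: y := (hiff x).mp (List.infix_refl x)
  have h2 : y <:+: x := (hiff y).mpr (List.infix_refl y)
  exact h1.eq_of_length (le_antisymm h1.length_le h2.length_le)

noncomputable def f : List α → ℝ := fun w => (1 : ℝ) / (w.length : ℝ) ^ 2

lemma f_nonneg (w : List α) : 0 ≤ f w := by
  unfold f; positivity

lemma f_pos {w : List α} (hw : w ≠ []) : 0 < f w := by
  unfold f
  have : 0 < w.length := List.length_pos_iff.mpr hw
  positivity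

lemma sdFin [Fintype α] (x y : List α) :
    (symmDiff {w : List α | IsMAW x w} {w : List α | IsMAW y w}).Finite := by
  rw [Set.symmDiff_def]
  exact ((maw_finite x).diff).union ((maw_finite y).diff)

lemma LW_eq_sum [Fintype α] (x y : List α) :
    LW x y = ∑ w ∈ (sdFin x y).toFinset, f w := by
  rw [LW, ← Finset.tsum_subtype]
  exact tsum_congr_set_coe (fun w : List α => (1 : ℝ) / (w.length : ℝ) ^ 2)
    ((sdFin x y).coe_toFinset.symm)

lemma sum_union_le [DecidableEq (List α)] {s t : Finset (List α)} :
    ∑ w ∈ s ∪ t, f w ≤ ∑ w ∈ s, f w + ∑ w ∈ t, f w := by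
  have hd : Disjoint s (t \ s) := Finset.disjoint_sdiff
  have h1 : ∑ w ∈ s ∪ t, f w = ∑ w ∈ s, f w + ∑ w ∈ t \ s, f w := by
    rw [← Finset.sum_union hd, Finset.union_sdiff_self_eq_union]
  have h2 : ∑ w ∈ t \ s, f w ≤ ∑ w ∈ t, f w :=
    Finset.sum_le_sum_of_subset_of_nonneg (fun w hw => (Finset.mem_sdiff.mp hw).1)
      (fun w _ _ => f_nonneg w)
  rw [h1]
  linarith

end LWaux

open LWaux in
/-- `LW` is a metric on the set of finite words over a finite
alphabet: nonnegative, symmetric, zero exactly on the diagonal, and satisfying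
the triangle inequality. -/
theorem LW_is_metric {α : Type*} [Fintype α] :
    (∀ x y : List α, 0 ≤ LW x y) ∧
    (∀ x y : List α, LW x y = LW y x) ∧
    (∀ x y : List α, LW x y = 0 ↔ x = y) ∧
    (∀ x y z : List α, LW x y ≤ LW x z + LW z y) := by
  classical
  refine ⟨?_, ?_, ?_, ?_⟩
  · intro x y
    rw [LW_eq_sum]
    exact Finset.sum_nonneg fun w _ => f_nonneg w
  · intro x y
    rw [LW_eq_sum, LW_eq_sum]
    apply Finset.sum_congr _ (fun _ _ => rfl)
    ext w
    simp [Set.Finite.mem_toFinset, symmDiff_comm]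
  · intro x y
    rw [LW_eq_sum]
    constructor
    · intro h0
      have hempty : (sdFin x y).toFinset = ∅ := by
        by_contra hne
        obtain ⟨w, hw⟩ := Finset.nonempty_of_ne_empty hne
        have hwmem : w ∈ symmDiff {w : List α | IsMAW x w} {w : List α | IsMAW y w} := by
          simpa [Set.Finite.mem_toFinset] using hw
        have hwne : w ≠ [] := by
          rcases hwmem with ⟨hm, _⟩ | ⟨hm, _⟩
          · exact maw_ne_nil hm
          · exact maw_ne_nil hm
        have hpos : 0 < f w := f_pos hwne
        have hle : f w ≤ 0 := h0 ▸ Finset.single_le_sum (fun v _ => f_nonneg v) hw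
        linarith
      apply eq_of_maw_eq (x := x) (y := y)
      have : symmDiff {w : List α | IsMAW x w} {w : List α | IsMAW y w} = ∅ := by
        rw [← Set.Finite.coe_toFinset (sdFin x y), hempty]
        simp
      exact symmDiff_eq_bot.mp this
    · rintro rfl
      have : (sdFin x x).toFinset = ∅ := by
        ext w; simp [Set.Finite.mem_toFinset, symmDiff_self]
      rw [this, Finset.sum_empty]
  · intro x y z
    rw [LW_eq_sum, LW_eq_sum, LW_eq_sum]
    set A := {w : List α | IsMAW x w}
    set B := {w : List α | IsMAW y w}
    set C := {w : List α | IsMAW z w}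
    have hsub : (sdFin x y).toFinset ⊆
        (sdFin x z).toFinset ∪
        (sdFin z y).toFinset := by
      intro w hw
      have hwmem : w ∈ symmDiff A B := by simpa [Set.Finite.mem_toFinset] using hw
      have : w ∈ symmDiff A C ∪ symmDiff C B := symmDiff_triangle A C B hwmem
      rcases (this : w ∈ symmDiff A C ∪ symmDiff C B) with h | h
      · exact Finset.mem_union_left _ (by simpa [Set.Finite.mem_toFinset] using h)
      · exact Finset.mem_union_right _ (by simpa [Set.Finite.mem_toFinset] using h)
    calc ∑ w ∈ (sdFin x y).toFinset, f w
        ≤ ∑ w ∈ (sdFin x z).toFinset ∪ (sdFin z y).toFinset, f w :=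
          Finset.sum_le_sum_of_subset_of_nonneg hsub (fun w _ _ => f_nonneg w)
      _ ≤ _ := sum_union_le
end

section
/- For every n and every alphabet size σ with 2 ≤ σ ≤ n, there exists a word of length n over an alphabet of size σ having Ω(σn) minimal absent words; thus the upper bound O(σn) on the number of minimal absent words is asymptotically tight. -/
open Fin.NatCast

namespace MawAux

lemma infix_of_pointwise {α : Type*} (w x : List α) (i : ℕ)
    (h : ∀ j, j < w.length → w[j]? = x[i+j]?) : w <:+: x := by
  have hw : w = (x.drop i).take w.length := by
    apply List.ext_getElem?
    intro j
    rw [List.getElem?_take, List.getElem?_drop]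
    by_cases hj : j < w.length
    · simp only [hj, if_true]
      exact h j hj
    · simp only [hj, if_false]
      exact List.getElem?_eq_none (by omega)
  rw [hw]
  exact ((List.take_prefix _ _).isInfix).trans (List.drop_suffix i x).isInfix

lemma pointwise_of_infix {α : Type*} {w x : List α} (h : w <:+: x) :
    ∃ i, i + w.length ≤ x.length ∧ ∀ j, j < w.length → w[j]? = x[i+j]? := by
  obtain ⟨s, t, rfl⟩ := h
  refine ⟨s.length, by simp, ?_⟩
  intro j hj
  rw [List.getElem?_append_left (by simp; omega),
    List.getElem?_append_right (by omega)]
  simp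

lemma proper_infix_cases {α : Type*} {v w : List α} (h : v <:+: w) (hne : v ≠ w) :
    v <:+: w.dropLast ∨ v <:+: w.tail := by
  obtain ⟨s, t, hst⟩ := h
  cases t with
  | nil =>
    cases s with
    | nil => simp at hst; exact absurd hst hne
    | cons hd tl =>
      right
      rw [← hst]
      exact ⟨tl, [], by simp⟩
  | cons t0 ts =>
    left
    rw [← hst, List.append_assoc, List.dropLast_append_of_ne_nil (by simp)]
    exact ⟨s, (t0 :: ts).dropLast, by simp⟩

/-- The letter function: position `i` carries letter `(i+1)/q` if `q ∣ i+1` and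
`i+1 ≤ (σ-1)q`, else `0`. -/
def wf (σ q : ℕ) [NeZero σ] (i : ℕ) : Fin σ :=
  if (i+1) % q = 0 ∧ i+1 ≤ (σ-1)*q then (((i+1)/q : ℕ) : Fin σ) else 0

/-- The word. -/
def wrd (σ q n : ℕ) [NeZero σ] : List (Fin σ) := (List.range n).map (wf σ q)

lemma wrd_length (σ q n : ℕ) [NeZero σ] : (wrd σ q n).length = n := by simp [wrd]

lemma wrd_get {σ q n : ℕ} [NeZero σ] {i : ℕ} (h : i < n) :
    (wrd σ q n)[i]? = some (wf σ q i) := by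
  simp [wrd, List.getElem?_range h]

lemma wf_zero {σ q : ℕ} [NeZero σ] {i : ℕ} (h : (i+1) % q ≠ 0) : wf σ q i = 0 := by
  rw [wf, if_neg]; tauto

lemma wf_letter {σ q : ℕ} [NeZero σ] {a : ℕ} (hq : 1 ≤ q) (ha1 : 1 ≤ a)
    (ha2 : a ≤ σ - 1) : wf σ q (a*q - 1) = ((a : ℕ) : Fin σ) := by
  have haq : 1 ≤ a * q := Nat.one_le_iff_ne_zero.mpr (by positivity)
  have h1 : a*q - 1 + 1 = a*q := by omega
  rw [wf, h1, if_pos ⟨Nat.mul_mod_left a q, Nat.mul_le_mul_right q ha2⟩,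
    Nat.mul_div_cancel a (by omega)]

lemma wf_eq_letter {σ q : ℕ} [NeZero σ] (hq : 1 ≤ q) {i c : ℕ} (hc1 : 1 ≤ c)
    (hc2 : c ≤ σ - 1) (h : wf σ q i = ((c : ℕ) : Fin σ)) : i + 1 = c * q := by
  have hσ1 : 1 ≤ σ := Nat.pos_of_ne_zero (NeZero.ne σ)
  have hcσ : c < σ := by omega
  have hval : (((c : ℕ) : Fin σ) : ℕ) = c := Fin.val_cast_of_lt hcσ
  rw [wf] at h
  by_cases hcond : (i+1) % q = 0 ∧ i+1 ≤ (σ-1)*q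
  · rw [if_pos hcond] at h
    obtain ⟨hm, hle⟩ := hcond
    have hdlt : (i+1)/q ≤ σ - 1 := by
      have h2 := Nat.div_le_div_right (c := q) hle
      rwa [Nat.mul_div_cancel _ (by omega)] at h2
    have hdv : (((((i+1)/q) : ℕ) : Fin σ) : ℕ) = (i+1)/q :=
      Fin.val_cast_of_lt (by omega)
    have hqc : (i+1)/q = c := by rw [← hdv, h, hval]
    have hdvd : q ∣ (i+1) := Nat.dvd_of_mod_eq_zero hm
    rw [← hqc, mul_comm ((i+1)/q) q]
    exact (Nat.mul_div_cancel' hdvd).symm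
  · rw [if_neg hcond] at h
    have h0 := congrArg Fin.val h
    rw [hval, Fin.val_zero] at h0
    omega

/-- `a 0^k` is an infix of the word. -/
lemma P1 {σ q n : ℕ} [NeZero σ] (hq : 1 ≤ q) (hn : σ * q ≤ n) {a k : ℕ}
    (ha1 : 1 ≤ a) (ha2 : a ≤ σ - 1) (hk : k ≤ q - 1) :
    ((a : Fin σ) :: List.replicate k (0 : Fin σ)) <:+: wrd σ q n := by
  have hσ : 1 ≤ σ := Nat.pos_of_ne_zero (NeZero.ne σ)
  have hss : (σ - 1) * q + q = σ * q := by
    have h1 : (σ - 1) * q = σ * q - q := by rw [Nat.sub_one_mul]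
    have h2 : q ≤ σ * q := Nat.le_mul_of_pos_left q (by omega)
    omega
  have haq : a * q ≤ (σ - 1) * q := Nat.mul_le_mul_right q ha2
  have haq1 : 1 ≤ a * q := by nlinarith
  apply infix_of_pointwise _ _ (a*q - 1)
  intro j hj
  simp only [List.length_cons, List.length_replicate] at hj
  match j with
  | 0 =>
    rw [wrd_get (by omega), List.getElem?_cons_zero, Nat.add_zero,
      wf_letter hq ha1 ha2]
  | (j+1) =>
    rw [wrd_get (by omega), List.getElem?_cons_succ, List.getElem?_replicate,
      if_pos (by omega)]
    congr 1
    refine (wf_zero ?_).symm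
    have h3 : a*q - 1 + (j+1) + 1 = (j+1) + a * q := by omega
    rw [h3, Nat.add_mul_mod_self_right, Nat.mod_eq_of_lt (by omega)]
    omega

/-- `0^k b` is an infix of the word. -/
lemma P2 {σ q n : ℕ} [NeZero σ] (hq : 1 ≤ q) (hn : σ * q ≤ n) {b k : ℕ}
    (hb1 : 1 ≤ b) (hb2 : b ≤ σ - 1) (hk : k ≤ q - 1) :
    (List.replicate k (0 : Fin σ) ++ [(b : Fin σ)]) <:+: wrd σ q n := by
  have hσ : 1 ≤ σ := Nat.pos_of_ne_zero (NeZero.ne σ)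
  have hbq : (b-1) * q + q = b * q := by
    have h1 : (b - 1) * q = b * q - q := by rw [Nat.sub_one_mul]
    have h2 : q ≤ b * q := Nat.le_mul_of_pos_left q (by omega)
    omega
  have hbs : b * q ≤ σ * q := Nat.mul_le_mul_right q (by omega)
  apply infix_of_pointwise _ _ (b*q - 1 - k)
  intro j hj
  simp only [List.length_append, List.length_replicate, List.length_cons,
    List.length_nil] at hj
  by_cases hjk : j < k
  · rw [wrd_get (by omega), List.getElem?_append_left (by simpa using hjk),
      List.getElem?_replicate, if_pos hjk]
    congr 1
    refine (wf_zero ?_).symm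
    have h3 : b*q - 1 - k + j + 1 = (q - (k - j)) + (b-1) * q := by omega
    rw [h3, Nat.add_mul_mod_self_right, Nat.mod_eq_of_lt (by omega)]
    omega
  · have hjeq : j = k := by omega
    subst hjeq
    have h4 : b*q - 1 - j + j = b*q - 1 := by omega
    rw [h4, wrd_get (by omega), List.getElem?_append_right (by simp),
      wf_letter hq hb1 hb2]
    simp

/-- `a 0^k b` is NOT an infix (given `¬(k = q-1 ∧ b = a+1)`). -/
lemma P3 {σ q n : ℕ} [NeZero σ] (hq : 1 ≤ q) {a b k : ℕ}
    (ha1 : 1 ≤ a) (ha2 : a ≤ σ - 1) (hb1 : 1 ≤ b) (hb2 : b ≤ σ - 1)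
    (hk : k ≤ q - 1) (hbad : ¬(k = q - 1 ∧ b = a + 1)) :
    ¬ (((a : Fin σ) :: List.replicate k (0 : Fin σ)) ++ [(b : Fin σ)]) <:+: wrd σ q n := by
  intro h
  obtain ⟨i, hlen, hp⟩ := pointwise_of_infix h
  rw [wrd_length] at hlen
  simp only [List.length_append, List.length_cons, List.length_replicate,
    List.length_nil] at hlen hp
  have h0 := hp 0 (by omega)
  have hL := hp (k+1) (by omega)
  rw [List.getElem?_append_left (by simp), List.getElem?_cons_zero,
    Nat.add_zero, wrd_get (by omega)] at h0
  rw [List.getElem?_append_right (by simp), wrd_get (by omega)] at hL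
  simp only [List.length_cons, List.length_replicate, Nat.sub_self,
    List.getElem?_cons_zero] at hL
  have heq1 : i + 1 = a * q := wf_eq_letter hq ha1 ha2 (Option.some.inj h0).symm
  have heq2 : i + (k+1) + 1 = b * q := wf_eq_letter hq hb1 hb2 (Option.some.inj hL).symm
  have hAB : a * q < b * q := by rw [← heq1, ← heq2]; omega
  have hab : a < b := by
    by_contra hc
    exact absurd (Nat.mul_le_mul_right q (by omega : b ≤ a)) (by omega)
  have h6 : b * q ≤ (a+1) * q := by
    rw [add_one_mul, ← heq1, ← heq2]; omega
  have hba : b ≤ a + 1 := Nat.le_of_mul_le_mul_right h6 (by omega)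
  have hbeq : b = a + 1 := by omega
  subst hbeq
  rw [add_one_mul, ← heq1] at heq2
  exact hbad ⟨by omega, rfl⟩


end MawAux

namespace MawAux

lemma isMAW_word {σ q n : ℕ} [NeZero σ] (hq : 1 ≤ q) (hn : σ * q ≤ n) {a b k : ℕ}
    (ha1 : 1 ≤ a) (ha2 : a ≤ σ-1) (hb1 : 1 ≤ b) (hb2 : b ≤ σ-1) (hk : k ≤ q-1)
    (hbad : ¬(k = q-1 ∧ b = a+1)) :
    IsMAW (wrd σ q n) (((a : Fin σ) :: List.replicate k (0 : Fin σ)) ++ [(b : Fin σ)]) := by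
  constructor
  · exact P3 hq ha1 ha2 hb1 hb2 hk hbad
  · intro v hv hne
    rcases proper_infix_cases hv hne with h | h
    · rw [List.dropLast_concat] at h
      exact h.trans (P1 hq hn ha1 ha2 hk)
    · have ht : ((((a:ℕ) : Fin σ) :: List.replicate k (0:Fin σ)) ++ [((b:ℕ) : Fin σ)]).tail
          = List.replicate k (0:Fin σ) ++ [((b:ℕ) : Fin σ)] := rfl
      rw [ht] at h
      exact h.trans (P2 hq hn hb1 hb2 hk)

lemma arith_key {σ n q : ℕ} (hσ : 2 ≤ σ) (hq : 1 ≤ q) (hup : n < σ * q + σ) :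
    σ * n ≤ 16 * ((σ-1) * ((σ-1) * q) - (σ-2)) := by
  obtain ⟨s, rfl⟩ : ∃ s, σ = s + 2 := ⟨σ - 2, by omega⟩
  show (s+2) * n ≤ 16 * ((s+1) * ((s+1) * q) - s)
  have hn2 : n + 1 ≤ (s+2) * (q+1) := by nlinarith
  have hA : (s+2) * n ≤ ((s+2) * (s+2)) * (q+1) := by nlinarith
  have hB : ((s+2) * (s+2)) * (q+1) ≤ (4 * ((s+1) * (s+1))) * (2 * q) :=
    Nat.mul_le_mul (by nlinarith) (by omega)
  have hC : (4 * ((s+1) * (s+1))) * (2 * q) = 8 * ((s+1) * ((s+1) * q)) := by ring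
  have hD : 16 * s ≤ 8 * ((s+1) * ((s+1) * q)) := by nlinarith
  have hbig : (s+2) * n + 16 * s ≤ 16 * ((s+1) * ((s+1) * q)) :=
    (Nat.add_le_add (hA.trans (hB.trans_eq hC)) hD).trans_eq (by ring)
  have hge : s ≤ (s+1) * ((s+1) * q) := by nlinarith
  generalize hP : (s+1) * ((s+1) * q) = P at hbig hge ⊢
  generalize hM : (s+2) * n = M at hbig ⊢
  omega

end MawAux

open MawAux in
/-- the upper bound `O(σn)` on the number of minimal absent words
is asymptotically tight: there is a universal constant `c > 0` such that for
all `n` and all `σ` with `2 ≤ σ ≤ n` there is a word of length `n` over an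
alphabet of size `σ` with at least `c·σ·n` minimal absent words. -/
theorem maw_bound_tight :
    ∃ c : ℝ, 0 < c ∧ ∀ σ n : ℕ, 2 ≤ σ → σ ≤ n →
      ∃ x : List (Fin σ), x.length = n ∧
        c * (σ * n : ℕ) ≤ ({w : List (Fin σ) | IsMAW x w}.ncard : ℝ) := by
  classical
  refine ⟨1/16, by norm_num, ?_⟩
  intro σ n hσ hσn
  haveI : NeZero σ := ⟨by omega⟩
  have hq : 1 ≤ n / σ := (Nat.one_le_div_iff (by omega)).mpr hσn
  set q := n / σ with hqdef
  have hn : σ * q ≤ n := by rw [hqdef, mul_comm]; exact Nat.div_mul_le_self n σ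
  refine ⟨wrd σ q n, wrd_length σ q n, ?_⟩
  set T : Finset (ℕ × ℕ × ℕ) :=
    Finset.Icc 1 (σ-1) ×ˢ Finset.Icc 1 (σ-1) ×ˢ Finset.range q with hT
  set Bad : Finset (ℕ × ℕ × ℕ) :=
    (Finset.Icc 1 (σ-2)).image (fun a => (a, a+1, q-1)) with hBad
  set S : Finset (ℕ × ℕ × ℕ) := T \ Bad with hS
  set G : ℕ × ℕ × ℕ → List (Fin σ) :=
    fun p => ((p.1 : Fin σ) :: List.replicate p.2.2 (0:Fin σ)) ++ [(p.2.1 : Fin σ)] with hG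
  have hmem : ∀ a b k : ℕ, (a, b, k) ∈ S → 1 ≤ a ∧ a ≤ σ-1 ∧ 1 ≤ b ∧ b ≤ σ-1 ∧
      k ≤ q-1 ∧ ¬(k = q-1 ∧ b = a+1) := by
    intro a b k hp
    rw [hS, Finset.mem_sdiff, hT, hBad] at hp
    obtain ⟨hpT, hpB⟩ := hp
    simp only [Finset.mem_product, Finset.mem_Icc, Finset.mem_range] at hpT
    obtain ⟨⟨ha1, ha2⟩, ⟨hb1, hb2⟩, hk⟩ := hpT
    refine ⟨ha1, ha2, hb1, hb2, by omega, ?_⟩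
    rintro ⟨hk1, hbb⟩
    apply hpB
    rw [Finset.mem_image]
    exact ⟨a, by rw [Finset.mem_Icc]; omega, by rw [hbb, hk1]⟩
  have hmaw : ∀ p ∈ S, IsMAW (wrd σ q n) (G p) := by
    rintro ⟨a, b, k⟩ hp
    obtain ⟨h1, h2, h3, h4, h5, h6⟩ := hmem a b k hp
    exact isMAW_word hq hn h1 h2 h3 h4 h5 h6
  have hsub : G '' ↑S ⊆ {w : List (Fin σ) | IsMAW (wrd σ q n) w} := by
    rintro w ⟨p, hp, rfl⟩
    exact hmaw p hp
  have hinj : Set.InjOn G ↑S := by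
    rintro ⟨a, b, k⟩ hp ⟨a', b', k'⟩ hp' heq
    obtain ⟨ha1, ha2, hb1, hb2, -, -⟩ := hmem a b k hp
    obtain ⟨ha1', ha2', hb1', hb2', -, -⟩ := hmem a' b' k' hp'
    simp only [hG] at heq
    have hlen := congrArg List.length heq
    simp only [List.length_append, List.length_cons, List.length_replicate,
      List.length_nil] at hlen
    have hkk : k = k' := by omega
    subst hkk
    obtain ⟨hpre, hsuf⟩ := List.append_inj heq (by simp)
    have hhd : ((a:ℕ) : Fin σ) = ((a':ℕ) : Fin σ) := by
      injection hpre
    have hbc : ((b:ℕ) : Fin σ) = ((b':ℕ) : Fin σ) := by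
      injection hsuf
    have haa := congrArg Fin.val hhd
    rw [Fin.val_cast_of_lt (by omega), Fin.val_cast_of_lt (by omega)] at haa
    have hbb := congrArg Fin.val hbc
    rw [Fin.val_cast_of_lt (by omega), Fin.val_cast_of_lt (by omega)] at hbb
    simp [Prod.ext_iff, haa, hbb]
  have hfin : {w : List (Fin σ) | IsMAW (wrd σ q n) w}.Finite := by
    apply (List.finite_length_le (Fin σ) (n+1)).subset
    rintro w ⟨hw1, hw2⟩
    have hwne : w ≠ [] := by rintro rfl; exact hw1 List.nil_infix
    have hwl : 0 < w.length := List.length_pos_iff.mpr hwne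
    have hdl : w.dropLast ≠ w := by
      intro h
      have h2 := congrArg List.length h
      rw [List.length_dropLast] at h2
      omega
    have h3 := (hw2 _ (List.dropLast_prefix w).isInfix hdl).length_le
    rw [wrd_length, List.length_dropLast] at h3
    simp only [Set.mem_setOf_eq]
    omega
  have hcard : S.card ≤ {w : List (Fin σ) | IsMAW (wrd σ q n) w}.ncard := by
    calc S.card = (↑S : Set (ℕ × ℕ × ℕ)).ncard := (Set.ncard_coe_finset S).symm
      _ = (G '' ↑S).ncard := (Set.ncard_image_of_injOn hinj).symm
      _ ≤ _ := Set.ncard_le_ncard hsub hfin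
  have hIcc1 : (Finset.Icc 1 (σ-1)).card = σ - 1 := by rw [Nat.card_Icc]; omega
  have hT_card : T.card = (σ-1) * ((σ-1) * q) := by
    rw [hT, Finset.card_product, Finset.card_product, hIcc1, Finset.card_range]
  have hBad_card : Bad.card ≤ σ - 2 := by
    calc Bad.card ≤ (Finset.Icc 1 (σ-2)).card := Finset.card_image_le
      _ = σ - 2 := by rw [Nat.card_Icc]; omega
  have hScard : (σ-1) * ((σ-1) * q) - (σ-2) ≤ S.card := by
    calc (σ-1) * ((σ-1) * q) - (σ-2) = T.card - (σ-2) := by rw [hT_card]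
      _ ≤ T.card - Bad.card := Nat.sub_le_sub_left hBad_card _
      _ ≤ (T \ Bad).card := Finset.le_card_sdiff Bad T
      _ = S.card := by rw [hS]
  have hup : n < σ * q + σ := by
    have h1 : σ * q + n % σ = n := Nat.div_add_mod n σ
    have h2 : n % σ < σ := Nat.mod_lt _ (by omega)
    calc n = σ * q + n % σ := h1.symm
      _ < σ * q + σ := Nat.add_lt_add_left h2 _
  have hkey : σ * n ≤ 16 * ((σ-1) * ((σ-1) * q) - (σ-2)) := arith_key hσ hq hup
  have hfinal : σ * n ≤ 16 * {w : List (Fin σ) | IsMAW (wrd σ q n) w}.ncard :=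
    hkey.trans (Nat.mul_le_mul_left 16 (hScard.trans hcard))
  have hfr : ((σ * n : ℕ) : ℝ) ≤ 16 * ({w : List (Fin σ) | IsMAW (wrd σ q n) w}.ncard : ℝ) := by
    exact_mod_cast hfinal
  linarith
end

section
/- If u is a factor of a word x of length at least |x| − 1, then u cannot be extended both to the left by two distinct letters and to the right by two distinct letters within the language F_{x*} of factors of powers of x; consequently every minimal absent word of F_{x*} has length at most |x|. -/
/-- The factorial language `F_{x*}` of all factors of powers of `x`. -/
def FactorsPow {α : Type*} (x : List α) : Set (List α) :=
  {w : List α | ∃ k : ℕ, w <:+: (List.replicate k x).flatten}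

/-- `w` is a minimal absent word of the language `L`. -/
def IsMAWLang {α : Type*} (L : Set (List α)) (w : List α) : Prop :=
  ∃ (a b : α) (u : List α), w = a :: (u ++ [b]) ∧ w ∉ L ∧
    (a :: u) ∈ L ∧ (u ++ [b]) ∈ L

namespace CMawAux

variable {α : Type*}

/-- The letters of the periodic word `x^ω`. -/
def sfun (x : List α) (hn : 0 < x.length) (i : ℕ) : α :=
  x[i % x.length]'(Nat.mod_lt _ hn)

lemma sfun_congr (x : List α) (hn : 0 < x.length) {i j : ℕ}
    (h : i % x.length = j % x.length) : sfun x hn i = sfun x hn j := by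
  simp only [sfun, h]

lemma flat_getElem (x : List α) (hn : 0 < x.length) (k : ℕ) :
    ∀ j (h : j < (List.replicate k x).flatten.length),
      (List.replicate k x).flatten[j] = sfun x hn j := by
  induction k with
  | zero => intro j h; simp at h
  | succ k ih =>
    intro j h
    have hre : (List.replicate (k + 1) x).flatten = x ++ (List.replicate k x).flatten := by
      rw [List.replicate_succ, List.flatten_cons]
    rw [List.getElem_of_eq hre h]
    rcases lt_or_ge j x.length with hj | hj
    · rw [List.getElem_append_left hj]
      simp [sfun, Nat.mod_eq_of_lt hj]
    · rw [List.getElem_append_right hj, ih]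
      exact sfun_congr x hn (Nat.mod_eq_sub_mod hj).symm

lemma mem_factorsPow_iff (x : List α) (hn : 0 < x.length) (w : List α) :
    w ∈ FactorsPow x ↔ ∃ p : ℕ, ∀ i (h : i < w.length), w[i] = sfun x hn (p + i) := by
  constructor
  · rintro ⟨k, l₁, l₂, hflat⟩
    refine ⟨l₁.length, fun i hi => ?_⟩
    have hb : l₁.length + i < (List.replicate k x).flatten.length := by
      rw [← hflat]; simp; omega
    have h0 := flat_getElem x hn k (l₁.length + i) hb
    rw [← h0, List.getElem_of_eq hflat.symm hb,
      List.getElem_append_left (as := l₁ ++ w) (by simp; omega),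
      List.getElem_append_right (by omega)]
    simp
  · rintro ⟨p, hp⟩
    refine ⟨p + w.length, ?_⟩
    have hfl : (List.replicate (p + w.length) x).flatten.length
        = (p + w.length) * x.length := by simp
    have hkl : p + w.length ≤ (p + w.length) * x.length :=
      Nat.le_mul_of_pos_right _ hn
    have heq : w
        = (((List.replicate (p + w.length) x).flatten).drop p).take w.length := by
      apply List.ext_getElem
      · rw [List.length_take, List.length_drop, hfl]; omega
      · intro i h1 h2
        rw [List.getElem_take, List.getElem_drop,
          flat_getElem x hn (p + w.length) _ (by omega)]
        exact hp i h1
    have hinf := ((List.take_prefix w.length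
        (((List.replicate (p + w.length) x).flatten).drop p)).isInfix).trans
      ((List.drop_suffix p ((List.replicate (p + w.length) x).flatten)).isInfix)
    simpa only [← heq] using hinf

/-- Core cyclic lemma: if adding `δ` preserves `s` at all residues except possibly
one, then it preserves `s` everywhere. -/
lemma cyc (x : List α) (hn : 0 < x.length) (δ e : ℕ)
    (h : ∀ j : ℕ, j % x.length ≠ e % x.length → sfun x hn (j + δ) = sfun x hn j) :
    ∀ j : ℕ, sfun x hn (j + δ) = sfun x hn j := by
  set n := x.length with hnn
  rcases Nat.eq_zero_or_pos (δ % n) with hδ0 | hδpos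
  · intro j
    apply sfun_congr
    rw [Nat.add_mod, ← hnn, hδ0, Nat.add_zero, Nat.mod_mod_of_dvd _ dvd_rfl]
  · have hex : ∃ t, 1 ≤ t ∧ t * δ % n = 0 := ⟨n, hn, by simp [Nat.mul_mod_right]⟩
    classical
    set t := Nat.find hex with ht
    obtain ⟨ht1, htz⟩ : 1 ≤ t ∧ t * δ % n = 0 := Nat.find_spec hex
    have hmin : ∀ k, k < t → ¬(1 ≤ k ∧ k * δ % n = 0) := fun k hk => Nat.find_min hex hk
    have chain : ∀ k, 1 ≤ k → k ≤ t → sfun x hn (e + k * δ) = sfun x hn (e + δ) := by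
      intro k
      induction k with
      | zero => intro h1 _; omega
      | succ k ih =>
        intro _ hk1
        rcases Nat.eq_zero_or_pos k with rfl | hkpos
        · simp
        · have hklt : k < t := by omega
          have hkδ : k * δ % n ≠ 0 := fun hc => hmin k hklt ⟨hkpos, hc⟩
          have hne : (e + k * δ) % n ≠ e % n := by
            intro hc
            have hcc : (k * δ) % n = 0 % n :=
              Nat.ModEq.add_left_cancel (Nat.ModEq.refl e) (by show (e + k * δ) % n = (e + 0) % n; rw [Nat.add_zero]; exact hc)
            simp at hcc
            exact hkδ hcc
          have hstep : sfun x hn (e + k * δ + δ) = sfun x hn (e + k * δ) := h _ hne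
          calc sfun x hn (e + (k + 1) * δ) = sfun x hn (e + k * δ + δ) := by
                ring_nf
            _ = sfun x hn (e + k * δ) := hstep
            _ = sfun x hn (e + δ) := ih hkpos hklt.le
    have hfix : sfun x hn (e + δ) = sfun x hn e := by
      rw [← chain t ht1 le_rfl]
      apply sfun_congr
      rw [Nat.add_mod, ← hnn, htz, Nat.add_zero, Nat.mod_mod_of_dvd _ dvd_rfl]
    intro j
    rcases eq_or_ne (j % n) (e % n) with hje | hje
    · calc sfun x hn (j + δ) = sfun x hn (e + δ) := by
            apply sfun_congr; rw [Nat.add_mod, ← hnn, hje, ← Nat.add_mod]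
        _ = sfun x hn e := hfix
        _ = sfun x hn j := sfun_congr x hn hje.symm
    · exact h j hje

/-- Rotation lemma: two occurrences (at `p` and `q`) of a common word of length
`≥ n - 1` in `x^ω` force full agreement of the shifted sequences. -/
lemma rot (x : List α) (hn : 0 < x.length) (p q m : ℕ) (hm : x.length - 1 ≤ m)
    (hag : ∀ i, i < m → sfun x hn (p + i) = sfun x hn (q + i)) :
    ∀ j, sfun x hn (p + j) = sfun x hn (q + j) := by
  set n := x.length with hnn
  have hple : p + 1 ≤ n * (p + 1) := Nat.le_mul_of_pos_left _ hn
  set δ := q + n * (p + 1) - p with hδ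
  have hpδ : p + δ = q + n * (p + 1) := by omega
  have hpδmod : (p + δ) % n = q % n := by
    rw [hpδ]; exact Nat.add_mul_mod_self_left q n (p + 1)
  have hcyc : ∀ j : ℕ, sfun x hn (j + δ) = sfun x hn j := by
    apply cyc x hn δ (p + (n - 1))
    intro j hj
    have hjle : p ≤ j + n * (p + 1) := by omega
    set c := j + n * (p + 1) - p with hc
    have hcc : p + c = j + n * (p + 1) := by omega
    set i0 := c % n with hi0
    have hi0lt : i0 < n := Nat.mod_lt _ hn
    have h1 : (p + i0) % n = j % n := by
      rw [hi0, Nat.add_mod_mod, hcc]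
      exact Nat.add_mul_mod_self_left j n (p + 1)
    have hi0ne : i0 ≠ n - 1 := by
      intro hcon
      apply hj
      rw [← h1, hcon]
    have hi0m : i0 < m := by omega
    calc sfun x hn (j + δ)
        = sfun x hn (p + i0 + δ) := by
          apply sfun_congr
          rw [Nat.add_mod, Nat.add_mod (p + i0), ← hnn, h1]
      _ = sfun x hn (q + i0) := by
          apply sfun_congr
          have he : p + i0 + δ = (p + δ) + i0 := by ring
          rw [he, Nat.add_mod, ← hnn, hpδmod, ← Nat.add_mod]
      _ = sfun x hn (p + i0) := (hag i0 hi0m).symm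
      _ = sfun x hn j := sfun_congr x hn h1
  intro j
  calc sfun x hn (p + j) = sfun x hn (p + j + δ) := (hcyc (p + j)).symm
    _ = sfun x hn (q + j) := by
        apply sfun_congr
        have he : p + j + δ = (p + δ) + j := by ring
        rw [he, Nat.add_mod, ← hnn, hpδmod, ← Nat.add_mod]

end CMawAux

open CMawAux

/-- a factor `u ∈ F_{x*}` of length at least `|x| - 1` cannot be
extended to the left by two distinct letters and to the right by two distinct
letters within `F_{x*}`; consequently every minimal absent word of `F_{x*}`
has length at most `|x|`. -/
theorem circular_maw_length_bound {α : Type*} (x : List α) :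
    (∀ u : List α, u ∈ FactorsPow x → x.length - 1 ≤ u.length →
      ¬ ((∃ a a' : α, a ≠ a' ∧ (a :: u) ∈ FactorsPow x ∧ (a' :: u) ∈ FactorsPow x) ∧
         (∃ b b' : α, b ≠ b' ∧ (u ++ [b]) ∈ FactorsPow x ∧ (u ++ [b']) ∈ FactorsPow x))) ∧
    (∀ w : List α, IsMAWLang (FactorsPow x) w → w.length ≤ x.length) := by
  rcases Nat.eq_zero_or_pos x.length with hn0 | hn
  · have hx : x = [] := List.length_eq_zero_iff.mp hn0
    subst hx
    have hmem : ∀ w : List α, w ∈ FactorsPow ([] : List α) → w = [] := by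
      rintro w ⟨k, hw⟩
      have hfl : (List.replicate k ([] : List α)).flatten = [] := by
        induction k with
        | zero => simp
        | succ k ih => simp [List.replicate_succ, ih]
      rw [hfl] at hw
      exact List.eq_nil_of_infix_nil hw
    constructor
    · rintro u hu hlen ⟨⟨a, a', hne, ha, ha'⟩, -⟩
      exact absurd (hmem _ ha) (by simp)
    · rintro w ⟨a, b, u, hw, hwn, hau, hub⟩
      exact absurd (hmem _ hau) (by simp)
  · set n := x.length with hnn
    have key : ∀ (u : List α) (a a' : α), n - 1 ≤ u.length →
        (a :: u) ∈ FactorsPow x → (a' :: u) ∈ FactorsPow x → a = a' := by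
      intro u a a' hlen ha ha'
      obtain ⟨P, hP⟩ := (mem_factorsPow_iff x hn _).mp ha
      obtain ⟨Q, hQ⟩ := (mem_factorsPow_iff x hn _).mp ha'
      have haP : a = sfun x hn P := hP 0 (by simp)
      have haQ : a' = sfun x hn Q := hQ 0 (by simp)
      have hag : ∀ i, i < u.length → sfun x hn (P + 1 + i) = sfun x hn (Q + 1 + i) := by
        intro i hi
        have h1 := hP (i + 1) (by simp; omega)
        have h2 := hQ (i + 1) (by simp; omega)
        simp only [List.getElem_cons_succ] at h1 h2
        rw [show P + (i + 1) = P + 1 + i by ring] at h1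
        rw [show Q + (i + 1) = Q + 1 + i by ring] at h2
        rw [← h1, ← h2]
      have hr := rot x hn (P + 1) (Q + 1) u.length hlen hag (n - 1)
      rw [show P + 1 + (n - 1) = P + n by omega, show Q + 1 + (n - 1) = Q + n by omega] at hr
      have hPn : sfun x hn (P + n) = sfun x hn P :=
        sfun_congr x hn (by rw [Nat.add_mod_right])
      have hQn : sfun x hn (Q + n) = sfun x hn Q :=
        sfun_congr x hn (by rw [Nat.add_mod_right])
      rw [haP, haQ, ← hPn, ← hQn, hr]
    constructor
    · rintro u hu hlen ⟨⟨a, a', hne, ha, ha'⟩, -⟩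
      exact hne (key u a a' hlen ha ha')
    · rintro w ⟨a, b, u, hw, hwn, hau, hub⟩
      by_contra hlt
      push_neg at hlt
      have hwl : w.length = u.length + 2 := by simp [hw]
      have hlen : n - 1 ≤ u.length := by omega
      obtain ⟨P, hP⟩ := (mem_factorsPow_iff x hn _).mp hau
      obtain ⟨Q, hQ⟩ := (mem_factorsPow_iff x hn _).mp hub
      have haP : a = sfun x hn P := hP 0 (by simp)
      have hag : ∀ i, i < u.length → sfun x hn (P + 1 + i) = sfun x hn (Q + i) := by
        intro i hi
        have h1 := hP (i + 1) (by simp; omega)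
        simp only [List.getElem_cons_succ] at h1
        rw [show P + (i + 1) = P + 1 + i by ring] at h1
        have h2 := hQ i (by simp; omega)
        rw [List.getElem_append_left hi] at h2
        rw [← h1, ← h2]
      have hrot := rot x hn (P + 1) Q u.length hlen hag (n - 1)
      rw [show P + 1 + (n - 1) = P + n by omega] at hrot
      have hPn : sfun x hn (P + n) = sfun x hn P :=
        sfun_congr x hn (by rw [Nat.add_mod_right])
      apply hwn
      rw [mem_factorsPow_iff x hn]
      refine ⟨Q + (n - 1), fun i hi => ?_⟩
      subst hw
      match i with
      | 0 =>
        simp only [List.getElem_cons_zero, Nat.add_zero]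
        rw [haP, ← hPn, hrot]
      | (j + 1) =>
        simp only [List.getElem_cons_succ]
        have hj : j < u.length + 1 := by
          simp at hi; omega
        have h2 := hQ j (by simp; omega)
        rw [h2]
        apply sfun_congr
        rw [show Q + (n - 1) + (j + 1) = (Q + j) + n by omega, Nat.add_mod_right]
end

section
/- Every factor of a word x that occurs at least twice in x is a factor of some minimal absent word of x; consequently q(x) ≥ h(x) − 1, where h(x) is the length of a shortest factor of x occurring exactly once in x. -/
/-- `w` occurs in `x` at starting position `i`. -/
def OccursAt {α : Type*} (x w : List α) (i : ℕ) : Prop :=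
  i + w.length ≤ x.length ∧ w <+: x.drop i

section Helpers

variable {α : Type*}

lemma occ_infix {x w : List α} {i : ℕ} (h : OccursAt x w i) : w <:+: x :=
  h.2.isInfix.trans (List.drop_suffix i x).isInfix

lemma infix_occ {x w : List α} (h : w <:+: x) : ∃ i, OccursAt x w i := by
  obtain ⟨s, t, rfl⟩ := h
  refine ⟨s.length, ?_, ?_⟩
  · simp
  · rw [List.append_assoc, List.drop_left]
    exact ⟨t, rfl⟩

lemma occ_prefix {x w v : List α} {i : ℕ} (hv : v <+: w) (h : OccursAt x w i) :
    OccursAt x v i := by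
  have hl := hv.length_le
  exact ⟨by have := h.1; omega, hv.trans h.2⟩

lemma occ_cons_tail {x : List α} {a : α} {u : List α} {i : ℕ}
    (h : OccursAt x (a :: u) i) : OccursAt x u (i + 1) := by
  obtain ⟨t, ht⟩ := h.2
  refine ⟨by have := h.1; simp at this ⊢; omega, ⟨t, ?_⟩⟩
  have hd : x.drop (i + 1) = (x.drop i).drop 1 := by
    rw [List.drop_drop]
  rw [hd, ← ht]
  simp

lemma occ_right_ext {x u : List α} {i : ℕ} (h : OccursAt x u i)
    (hlt : i + u.length < x.length) : ∃ b, OccursAt x (u ++ [b]) i := by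
  obtain ⟨t, ht⟩ := h.2
  have hlen : (x.drop i).length = x.length - i := by simp
  have htne : t ≠ [] := by
    intro h0
    subst h0
    have : u.length = x.length - i := by
      rw [← hlen, ← ht]; simp
    omega
  cases t with
  | nil => exact absurd rfl htne
  | cons b t' =>
    refine ⟨b, ⟨by simp; omega, ⟨t', ?_⟩⟩⟩
    rw [← ht]
    simp

lemma occ_left_ext {x u : List α} {j : ℕ} (h : OccursAt x u (j + 1)) :
    ∃ a, OccursAt x (a :: u) j := by
  have hj : j < x.length := by have := h.1; omega
  refine ⟨x[j], ⟨by have := h.1; simp; omega, ?_⟩⟩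
  obtain ⟨t, ht⟩ := h.2
  refine ⟨t, ?_⟩
  rw [List.drop_eq_getElem_cons hj, ← ht]
  simp

end Helpers

/-- if `x` contains at least two distinct letters, then every
factor of `x` occurring at least twice in `x` is a factor of some minimal
absent word of `x`; consequently, `q(x) ≥ h(x) - 1` where `h(x)` is the length
of a shortest factor of `x` occurring exactly once in `x`: every factor of `x`
of length `h(x) - 1` is a factor of some minimal absent word of `x`. -/
theorem repeated_factor_in_maw {α : Type*} (x : List α)
    (h2 : ∃ a b : α, a ∈ x ∧ b ∈ x ∧ a ≠ b) (h : ℕ)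
    (hh : IsLeast {ℓ : ℕ | ∃ w : List α, w <:+: x ∧ w.length = ℓ ∧
            (∃! i : ℕ, OccursAt x w i)} h) :
    (∀ w : List α, (∃ i j : ℕ, i < j ∧ OccursAt x w i ∧ OccursAt x w j) →
      ∃ m : List α, IsMAW x m ∧ w <:+: m) ∧
    (∀ w : List α, w <:+: x → w.length = h - 1 →
      ∃ m : List α, IsMAW x m ∧ w <:+: m) := by
  classical
  have main : ∀ w : List α, (∃ i j : ℕ, i < j ∧ OccursAt x w i ∧ OccursAt x w j) →
      ∃ m : List α, IsMAW x m ∧ w <:+: m := by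
    intro w ⟨i, j, hij, hi, hj⟩
    set L : Set ℕ := {n | ∃ u : List α, u.length = n ∧ w <:+: u ∧
      ∃ p q : ℕ, p < q ∧ OccursAt x u p ∧ OccursAt x u q} with hL
    have hne : L.Nonempty := ⟨w.length, w, rfl, List.infix_rfl, i, j, hij, hi, hj⟩
    have hbdd : BddAbove L := by
      refine ⟨x.length, fun n hn => ?_⟩
      obtain ⟨u, hlen, _, p, q, hpq, _, hq⟩ := hn
      have := hq.1
      omega
    obtain ⟨u, hulen, hwu, p, q, hpq, hp, hq⟩ := Nat.sSup_mem hne hbdd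
    have hmax : ∀ v : List α, w <:+: v →
        (∃ p q : ℕ, p < q ∧ OccursAt x v p ∧ OccursAt x v q) → v.length ≤ sSup L :=
      fun v h1 h2 => le_csSup hbdd ⟨v, rfl, h1, h2⟩
    obtain ⟨q', rfl⟩ : ∃ q'', q = q'' + 1 := ⟨q - 1, by omega⟩
    have hplt : p + u.length < x.length := by
      have := hq.1; omega
    obtain ⟨b, hb⟩ := occ_right_ext hp hplt
    obtain ⟨a, ha⟩ := occ_left_ext hq
    -- uniqueness of occurrences of a :: u and u ++ [b]
    have hau : ∀ r, OccursAt x (a :: u) r → r = q' := by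
      intro r hr
      by_contra hner
      have htwo : ∃ p₀ q₀ : ℕ, p₀ < q₀ ∧ OccursAt x (a :: u) p₀ ∧ OccursAt x (a :: u) q₀ := by
        rcases lt_or_gt_of_ne hner with hlt | hgt
        · exact ⟨r, q', hlt, hr, ha⟩
        · exact ⟨q', r, hgt, ha, hr⟩
      have := hmax (a :: u) (hwu.trans ⟨[a], [], by simp⟩) htwo
      simp at this
      omega
    have hub : ∀ r, OccursAt x (u ++ [b]) r → r = p := by
      intro r hr
      by_contra hner
      have htwo : ∃ p₀ q₀ : ℕ, p₀ < q₀ ∧ OccursAt x (u ++ [b]) p₀ ∧ OccursAt x (u ++ [b]) q₀ := by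
        rcases lt_or_gt_of_ne hner with hlt | hgt
        · exact ⟨r, p, hlt, hr, hb⟩
        · exact ⟨p, r, hgt, hb, hr⟩
      have := hmax (u ++ [b]) (hwu.trans ⟨[], [b], by simp⟩) htwo
      simp at this
      omega
    refine ⟨a :: (u ++ [b]), ⟨?_, ?_⟩, hwu.trans ⟨[a], [b], by simp⟩⟩
    · -- absent
      intro hm
      obtain ⟨r, hr⟩ := infix_occ hm
      have h1 : OccursAt x (a :: u) r := occ_prefix ⟨[b], by simp⟩ hr
      have h2 : OccursAt x (u ++ [b]) (r + 1) := occ_cons_tail hr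
      have e1 := hau r h1
      have e2 := hub (r + 1) h2
      omega
    · -- all proper factors occur
      intro v hv hvne
      obtain ⟨s, t, hst⟩ := hv
      cases s with
      | nil =>
        simp at hst
        have htne : t ≠ [] := by
          intro h0
          subst h0
          simp at hst
          exact hvne hst
        obtain ⟨t', c, rfl⟩ := (List.eq_nil_or_concat t).resolve_left htne
        have heq : (v ++ t') ++ [c] = (a :: u) ++ [b] := by
          simpa [List.concat_eq_append] using hst
        have := List.append_inj' heq (by simp)
        have hv' : v <+: a :: u := ⟨t', this.1⟩
        exact hv'.isInfix.trans (occ_infix ha)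
      | cons c s' =>
        have heq : c :: (s' ++ v ++ t) = a :: (u ++ [b]) := by
          rw [← hst]; simp
        have h3 : s' ++ v ++ t = u ++ [b] := by
          injection heq with _ h3
        have hv' : v <:+: u ++ [b] := ⟨s', t, h3⟩
        exact hv'.trans (occ_infix hb)
  refine ⟨main, ?_⟩
  -- x is nonempty
  obtain ⟨a0, _, ha0, _, _⟩ := h2
  have hxne : 1 ≤ x.length := List.length_pos_iff.mpr (List.ne_nil_of_mem ha0)
  -- h ≥ 1
  have hh1 : 1 ≤ h := by
    by_contra hc
    have h0 : h = 0 := by omega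
    obtain ⟨w0, hw0x, hw0len, i0, hi0, huniq⟩ := hh.1
    have hw0 : w0 = [] := List.length_eq_zero_iff.mp (by omega)
    subst hw0
    have o0 : OccursAt x ([] : List α) 0 := ⟨by simp, List.nil_prefix⟩
    have o1 : OccursAt x ([] : List α) 1 := ⟨by simp; omega, List.nil_prefix⟩
    have := huniq 0 o0
    have := huniq 1 o1
    omega
  intro w hwx hwl
  obtain ⟨i0, hi0⟩ := infix_occ hwx
  by_cases hall : ∀ j, OccursAt x w j → j = i0
  · exfalso
    have hmem : w.length ∈ {ℓ : ℕ | ∃ w : List α, w <:+: x ∧ w.length = ℓ ∧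
        (∃! i : ℕ, OccursAt x w i)} := ⟨w, hwx, rfl, i0, hi0, hall⟩
    have := hh.2 hmem
    omega
  · push_neg at hall
    obtain ⟨j0, hj0, hj0ne⟩ := hall
    rcases lt_or_gt_of_ne hj0ne with hlt | hgt
    · exact main w ⟨j0, i0, hlt, hj0, hi0⟩
    · exact main w ⟨i0, j0, hgt, hi0, hj0⟩
end

section
/- For any word x, q(x) ≤ t(x) + 1, where t(x) is the length of a shortest infix of x (a factor that is neither a prefix nor a suffix) that occurs exactly once in x. -/
/-- `u` is an infix of `x`: a factor that is neither a prefix nor a suffix. -/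
def IsStrictInfix {α : Type*} (x u : List α) : Prop :=
  u <:+: x ∧ ¬ u <+: x ∧ ¬ u <:+ x

lemma occursAt_of_append {α : Type*} {x u p r : List α} (h : p ++ u ++ r = x) :
    OccursAt x u p.length := by
  constructor
  · have := congrArg List.length h
    simp at this
    omega
  · rw [← h, List.append_assoc, List.drop_left]; exact ⟨r, rfl⟩

lemma seg_append {α : Type*} (x : List α) {a b c : ℕ} (hab : a ≤ b) (hbc : b ≤ c) :
    (x.drop a).take (b - a) ++ (x.drop b).take (c - b) = (x.drop a).take (c - a) := by
  have h : c - a = (b - a) + (c - b) := by omega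
  have h2 : (b - a) + a = b := by omega
  rw [h, List.take_add, List.drop_drop, Nat.add_comm a (b-a), h2]

/-- `q(x) ≤ t(x) + 1`, where `t(x)` is the length of a shortest
infix of `x` occurring exactly once in `x`: any length `q ≤ |x|` such that
every `q`-gram of `x` is a factor of some minimal absent word of `x` satisfies
`q ≤ t(x) + 1`. -/
theorem qgram_upper_bound {α : Type*} (x : List α) (t : ℕ)
    (ht : IsLeast {ℓ : ℕ | ∃ u : List α, IsStrictInfix x u ∧ u.length = ℓ ∧
            (∃! i : ℕ, OccursAt x u i)} t) :
    ∀ q : ℕ, q ≤ x.length →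
      (∀ w : List α, w <:+: x → w.length = q →
        ∃ m : List α, IsMAW x m ∧ w <:+: m) →
      q ≤ t + 1 := by
  obtain ⟨⟨u, ⟨huinf, hupre, husuf⟩, hulen, i, hui, huniq⟩, hlb⟩ := ht
  intro q hq hqgram
  by_contra hcon
  push_neg at hcon
  have hq2 : t + 2 ≤ q := hcon
  have hiul : i + u.length ≤ x.length := hui.1
  obtain ⟨r, hr⟩ := hui.2  -- hr : u ++ r = x.drop i
  have hxeq : x = x.take i ++ u ++ r := by
    conv_lhs => rw [← List.take_append_drop i x, ← hr]
    rw [List.append_assoc]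
  -- i ≥ 1
  have hipos : 1 ≤ i := by
    rcases Nat.eq_zero_or_pos i with h0 | h
    · exfalso; apply hupre
      rw [h0, List.drop_zero] at hr
      exact ⟨r, hr⟩
    · exact h
  -- i + t + 1 ≤ |x|
  have hend : i + t + 1 ≤ x.length := by
    rcases Nat.lt_or_ge (i + t) x.length with h | h
    · omega
    · exfalso
      have hxl : x.length = i + t := by omega
      have hr0 : r = [] := by
        have := congrArg List.length hxeq
        simp [hulen] at this
        have : r.length = 0 := by omega
        exact List.eq_nil_of_length_eq_zero this
      apply husuf
      refine ⟨x.take i, ?_⟩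
      conv_rhs => rw [hxeq]
      rw [hr0, List.append_nil]
  set j := min (i - 1) (x.length - q) with hj
  have hji : j + 1 ≤ i := by omega
  have hjqx : j + q ≤ x.length := by omega
  have hitjq : i + t + 1 ≤ j + q := by omega
  -- u as a segment
  have hu_seg : (x.drop i).take t = u := by
    rw [← hr]; exact List.take_left' hulen
  set w : List α := (x.drop j).take q with hwdef
  set w1 : List α := (x.drop j).take (i - j) with hw1def
  set w2 : List α := (x.drop (i + t)).take ((j + q) - (i + t)) with hw2def
  have hw : w1 ++ u ++ w2 = w := by
    have hA := seg_append x (show j ≤ i by omega) (show i ≤ i + t by omega)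
    have hB := seg_append x (show j ≤ i + t by omega) (show i + t ≤ j + q by omega)
    have e1 : i + t - i = t := by omega
    have e2 : j + q - j = q := by omega
    rw [e1] at hA
    rw [e2] at hB
    rw [hw1def, hw2def, hwdef, ← hu_seg, hA, hB]
  have hwlen : w.length = q := by
    rw [hwdef]; simp; omega
  have hw1len : w1.length = i - j := by
    rw [hw1def]; simp; omega
  have hw2len : w2.length = (j + q) - (i + t) := by
    rw [hw2def]; simp; omega
  have hwinf : w <:+: x := by
    refine ⟨x.take j, (x.drop j).drop q, ?_⟩
    rw [hwdef, List.append_assoc, List.take_append_drop, List.take_append_drop]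
  obtain ⟨m, hmaw, s, t', hm⟩ := hqgram w hwinf hwlen
  -- m = (s ++ w1) ++ u ++ (w2 ++ t')
  have hmeq : (s ++ w1) ++ u ++ (w2 ++ t') = m := by
    rw [← hm, ← hw]; simp [List.append_assoc]
  have hc : s ++ w1 ≠ [] := by
    intro h
    have := congrArg List.length h
    simp [hw1len] at this
    omega
  have hd : w2 ++ t' ≠ [] := by
    intro h
    have := congrArg List.length h
    simp [hw2len] at this
    omega
  obtain ⟨c₀, c', hc'⟩ := List.exists_cons_of_ne_nil hc
  rcases List.eq_nil_or_concat (w2 ++ t') with h0 | ⟨d', d₁, hd'⟩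
  · exact hd h0
  rw [hc', hd'] at hmeq
  simp only [List.concat_eq_append] at hd' hmeq
  -- m = (c₀ :: c') ++ u ++ (d' ++ [d₁])
  -- proper factors
  have hm1 : (c' ++ u ++ (d' ++ [d₁])) <:+: x := by
    apply hmaw.2
    · exact ⟨[c₀], [], by rw [← hmeq]; simp [List.append_assoc]⟩
    · intro h
      have := congrArg List.length h
      rw [← hmeq] at this
      simp at this
  have hm2 : ((c₀ :: c') ++ u ++ d') <:+: x := by
    apply hmaw.2
    · exact ⟨[], [d₁], by rw [← hmeq]; simp [List.append_assoc]⟩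
    · intro h
      have := congrArg List.length h
      rw [← hmeq] at this
      simp at this
  obtain ⟨s₁, t₁, h1⟩ := hm1
  obtain ⟨s₂, t₂, h2⟩ := hm2
  -- occurrences of u
  have ho1 : OccursAt x u (s₁ ++ c').length := by
    apply occursAt_of_append (p := s₁ ++ c') (r := (d' ++ [d₁]) ++ t₁)
    rw [← h1]; simp [List.append_assoc]
  have ho2 : OccursAt x u (s₂ ++ (c₀ :: c')).length := by
    apply occursAt_of_append (p := s₂ ++ (c₀ :: c')) (r := d' ++ t₂)
    rw [← h2]; simp [List.append_assoc]
  have he1 : (s₁ ++ c').length = i := huniq _ ho1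
  have he2 : (s₂ ++ (c₀ :: c')).length = i := huniq _ ho2
  have hlen12 : s₁.length = s₂.length + 1 := by
    simp at he1 he2; omega
  -- pin down prefix
  have hP : s₂ ++ ((c₀ :: c') ++ u ++ d') = s₁ ++ (c' ++ u ++ d') := by
    have hN : (s₂ ++ ((c₀ :: c') ++ u ++ d')).length = (s₁ ++ (c' ++ u ++ d')).length := by
      simp; omega
    have t1 : x.take (s₂ ++ ((c₀ :: c') ++ u ++ d')).length = s₂ ++ ((c₀ :: c') ++ u ++ d') := by
      conv_lhs => rw [← h2]
      rw [show s₂ ++ ((c₀ :: c') ++ u ++ d') ++ t₂ = (s₂ ++ ((c₀ :: c') ++ u ++ d')) ++ t₂ by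
        simp [List.append_assoc]]
      exact List.take_left
    have t2 : x.take (s₁ ++ (c' ++ u ++ d')).length = s₁ ++ (c' ++ u ++ d') := by
      conv_lhs => rw [← h1]
      rw [show s₁ ++ (c' ++ u ++ (d' ++ [d₁])) ++ t₁ = (s₁ ++ (c' ++ u ++ d')) ++ ([d₁] ++ t₁) by
        simp [List.append_assoc]]
      exact List.take_left
    rw [← t1, ← t2, hN]
  -- m occurs in x
  apply hmaw.1
  refine ⟨s₂, t₁, ?_⟩
  rw [← hmeq]
  calc s₂ ++ ((c₀ :: c') ++ u ++ (d' ++ [d₁])) ++ t₁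
      = (s₂ ++ ((c₀ :: c') ++ u ++ d')) ++ ([d₁] ++ t₁) := by simp [List.append_assoc]
    _ = (s₁ ++ (c' ++ u ++ d')) ++ ([d₁] ++ t₁) := by rw [hP]
    _ = s₁ ++ (c' ++ u ++ (d' ++ [d₁])) ++ t₁ := by simp [List.append_assoc]
    _ = x := h1
end

section
/- Let aub (a,b letters, u a word) be a factor occurring exactly once in x. If ub occurs at least twice in x, and either (i) there is another occurrence of ub whose right extension differs from that of the occurrence inside aub at some position, or (ii) the occurrence of aub is not the one containing the first occurrence of ub, then aub is a prefix of some minimal absent word of x. Conversely, if aub is a prefix of some minimal absent word of x, then ub occurs at least twice in x and (i) or (ii) holds. -/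
section Helpers
variable {α : Type*}


lemma occursAt_iff_getElem {x w : List α} {i : ℕ} :
    OccursAt x w i ↔ i + w.length ≤ x.length ∧ ∀ j < w.length, x[i+j]? = w[j]? := by
  unfold OccursAt
  refine and_congr_right fun hlen => ?_
  constructor
  · intro h j hj
    rw [← List.getElem?_drop]
    obtain ⟨t, ht⟩ := h
    rw [← ht, List.getElem?_append_left hj]
  · intro h
    rw [List.prefix_iff_eq_take]
    apply List.ext_getElem?
    intro j
    rcases lt_or_ge j w.length with hj | hj
    · rw [List.getElem?_take_of_lt hj, List.getElem?_drop, h j hj]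
    · rw [List.getElem?_eq_none hj, List.getElem?_eq_none]
      rw [List.length_take, List.length_drop]
      omega

lemma infix_iff_occursAt {x w : List α} : w <:+: x ↔ ∃ i, OccursAt x w i := by
  constructor
  · rintro ⟨s, t, rfl⟩
    refine ⟨s.length, by simp, ?_⟩
    rw [List.append_assoc, List.drop_left]
    exact ⟨t, rfl⟩
  · rintro ⟨i, hlen, t, ht⟩
    exact ⟨x.take i, t, by rw [List.append_assoc, ht, List.take_append_drop]⟩

lemma OccursAt.of_prefix {x w v : List α} {i : ℕ} (h : OccursAt x w i) (hv : v <+: w) :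
    OccursAt x v i :=
  ⟨le_trans (by have := hv.length_le; omega) h.1, hv.trans h.2⟩

lemma proper_infix_cases {m v : List α} (h : v <:+: m) (hne : v ≠ m) :
    v <:+: m.dropLast ∨ v <:+: m.tail := by
  obtain ⟨s, t, hst⟩ := h
  rcases eq_or_ne t [] with rfl | ht
  · rcases eq_or_ne s [] with rfl | hs
    · exact absurd (by simpa using hst) hne
    · right
      rw [← hst, List.append_nil, List.tail_append_of_ne_nil hs]
      exact ⟨s.tail, [], by simp⟩
  · left
    rw [← hst, List.dropLast_append_of_ne_nil ht]
    exact ⟨s, t.dropLast, rfl⟩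

lemma construct (x : List α) (a b : α) (u : List α) (pos p ℓ : ℕ)
    (hx : OccursAt x (a :: (u ++ [b])) pos)
    (huniq : ∀ q, OccursAt x (a :: (u ++ [b])) q → q = pos)
    (hℓ : u.length + 1 ≤ ℓ)
    (hend : pos + 1 + ℓ ≤ x.length)
    (hp : p + ℓ < x.length)
    (hagree : ∀ j < ℓ, x[pos+1+j]? = x[p+j]?)
    (hlast : ∀ h1 : pos + 1 + ℓ < x.length, x[pos+1+ℓ]'h1 ≠ x[p+ℓ]'hp) :
    ∃ m, IsMAW x m ∧ (a :: (u ++ [b])) <+: m := by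
  set n := x.length with hn
  set s : List α := (x.drop (pos+1)).take ℓ with hs
  set c : α := x[p+ℓ]'hp with hc
  have hslen : s.length = ℓ := by simp [hs]; omega
  obtain ⟨hxlen, hxel⟩ := occursAt_iff_getElem.mp hx
  simp only [List.length_cons, List.length_append, List.length_singleton] at hxlen
  -- ub occurs at pos+1
  have hub_occ : OccursAt x (u ++ [b]) (pos+1) := by
    rw [occursAt_iff_getElem]
    refine ⟨by simp; omega, fun j hj => ?_⟩
    have := hxel (j+1) (by simp at hj ⊢; omega)
    rw [show pos + (j+1) = pos+1+j by omega] at this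
    simpa using this
  have hub_pre : (u ++ [b]) <+: x.drop (pos+1) := hub_occ.2
  have hs_pre_ub : (u ++ [b]) <+: s := by
    rw [List.prefix_iff_eq_take] at hub_pre ⊢
    rw [hub_pre, hs, List.take_take]
    congr 1
    simp at hub_pre ⊢
    omega
  have ha : x[pos]? = some a := by
    have := hxel 0 (by simp)
    simpa using this
  set m : List α := a :: (s ++ [c]) with hm
  have hmlen : m.length = ℓ + 2 := by simp [hm, hslen]
  have hpre : (a :: (u ++ [b])) <+: m := by
    rw [hm, List.cons_prefix_cons]
    exact ⟨rfl, hs_pre_ub.trans ⟨[c], rfl⟩⟩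
  -- dropLast m occurs at pos
  have hdl : m.dropLast = a :: s := by
    rw [hm, ← List.cons_append, List.dropLast_concat]
  have hdl_occ : OccursAt x (a :: s) pos := by
    constructor
    · simp [hslen]; omega
    · rw [List.drop_eq_getElem_cons (l := x) (i := pos) (by omega), List.cons_prefix_cons]
      constructor
      · have : x[pos]? = some (x[pos]'(by omega)) := List.getElem?_eq_getElem (by omega)
        rw [ha] at this
        exact (Option.some_inj.mp this)
      · exact (List.take_prefix ℓ _)
  -- tail m occurs at p
  have htl_occ : OccursAt x (s ++ [c]) p := by
    rw [occursAt_iff_getElem]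
    refine ⟨by simp [hslen]; omega, fun j hj => ?_⟩
    simp only [List.length_append, hslen, List.length_singleton] at hj
    rcases lt_or_ge j ℓ with hjℓ | hjℓ
    · rw [List.getElem?_append_left (by omega : j < s.length)]
      rw [hs, List.getElem?_take_of_lt hjℓ, List.getElem?_drop]
      rw [← hagree j hjℓ]
    · have hjeq : j = ℓ := by omega
      rw [hjeq]
      rw [List.getElem?_append_right (by omega : s.length ≤ ℓ), hslen]
      simp [hc, List.getElem?_eq_getElem hp]
  -- absence
  have habs : ¬ m <:+: x := by
    intro hinf
    obtain ⟨q, hq⟩ := infix_iff_occursAt.mp hinf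
    have hq' : q = pos := huniq q (OccursAt.of_prefix hq hpre)
    rw [hq'] at hq
    obtain ⟨hql, hqel⟩ := occursAt_iff_getElem.mp hq
    rw [hmlen] at hql
    have h1 : pos + 1 + ℓ < n := by omega
    have := hqel (ℓ+1) (by rw [hmlen]; omega)
    have hmel : m[ℓ+1]? = some c := by
      rw [hm]
      rw [List.getElem?_cons_succ, List.getElem?_append_right (by omega : s.length ≤ ℓ), hslen]
      simp
    rw [hmel, show pos + (ℓ+1) = pos+1+ℓ by omega, List.getElem?_eq_getElem h1] at this
    exact hlast h1 (Option.some_inj.mp this)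
  refine ⟨m, ⟨habs, fun v hv hne => ?_⟩, hpre⟩
  rcases proper_infix_cases hv hne with h | h
  · rw [hdl] at h
    exact h.trans (infix_iff_occursAt.mpr ⟨pos, hdl_occ⟩)
  · have htl : m.tail = s ++ [c] := rfl
    rw [htl] at h
    exact h.trans (infix_iff_occursAt.mpr ⟨p, htl_occ⟩)

lemma forward (x : List α) (a b : α) (u : List α) (pos : ℕ)
    (hpos : OccursAt x (a :: (u ++ [b])) pos)
    (huniq : ∀ q, OccursAt x (a :: (u ++ [b])) q → q = pos)
    (m : List α) (hmaw : IsMAW x m) (hpre : (a :: (u ++ [b])) <+: m) :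
    ((∃ p : ℕ, p ≠ pos + 1 ∧ OccursAt x (u ++ [b]) p) ∧
      ((∃ (p ℓ : ℕ) (h1 : pos + 1 + ℓ < x.length) (h2 : p + ℓ < x.length),
          OccursAt x (u ++ [b]) p ∧ x[pos + 1 + ℓ]'h1 ≠ x[p + ℓ]'h2) ∨
       (∃ p : ℕ, OccursAt x (u ++ [b]) p ∧ p < pos + 1))) := by
  obtain ⟨habs, hfac⟩ := hmaw
  set n := x.length with hn
  set L := m.length with hL
  have hkL : u.length + 2 < L := by
    rcases lt_or_eq_of_le hpre.length_le with h | h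
    · simpa using h
    · exfalso
      have := List.IsPrefix.eq_of_length hpre h
      rw [← this] at habs
      exact habs (infix_iff_occursAt.mpr ⟨pos, hpos⟩)
  have hmnil : m ≠ [] := by intro h; rw [h] at hL; simp at hL; omega
  -- dropLast m occurs at pos
  have hdl_inf : m.dropLast <:+: x := by
    apply hfac _ (List.dropLast_prefix m).isInfix
    intro h
    have := congrArg List.length h
    rw [List.length_dropLast] at this
    omega
  obtain ⟨q1, hq1⟩ := infix_iff_occursAt.mp hdl_inf
  have hpre_dl : (a :: (u ++ [b])) <+: m.dropLast := by
    rw [List.prefix_iff_eq_take] at hpre ⊢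
    rw [hpre, List.dropLast_eq_take, List.take_take]
    congr 1
    simp
    omega
  have hq1pos : q1 = pos := huniq q1 (hq1.of_prefix hpre_dl)
  rw [hq1pos] at hq1
  obtain ⟨hdl_len, hdl_el⟩ := occursAt_iff_getElem.mp hq1
  rw [List.length_dropLast] at hdl_len
  -- tail m occurs somewhere
  have htl_inf : m.tail <:+: x := by
    apply hfac _ (List.tail_suffix m).isInfix
    intro h
    have := congrArg List.length h
    rw [List.length_tail] at this
    omega
  obtain ⟨q, hq⟩ := infix_iff_occursAt.mp htl_inf
  have hub_tail : (u ++ [b]) <+: m.tail := by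
    obtain ⟨t, ht⟩ := hpre
    rw [← ht]
    exact ⟨t, by simp⟩
  have hub_q : OccursAt x (u ++ [b]) q := hq.of_prefix hub_tail
  obtain ⟨htl_len, htl_el⟩ := occursAt_iff_getElem.mp hq
  rw [List.length_tail] at htl_len
  have htl_get : ∀ j (hj : j < L - 1), x[q+j]? = m[j+1]? := by
    intro j hj
    have := htl_el j (by rw [List.length_tail]; omega)
    rwa [List.getElem?_tail] at this
  have hdl_get : ∀ j (hj : j < L - 1), x[pos+j]? = m[j]? := by
    intro j hj
    have := hdl_el j (by rw [List.length_dropLast]; omega)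
    rwa [List.getElem?_dropLast, if_pos hj] at this
  have hqne : q ≠ pos + 1 := by
    rintro rfl
    apply habs
    apply infix_iff_occursAt.mpr ⟨pos, ?_⟩
    rw [occursAt_iff_getElem]
    refine ⟨by omega, fun j hj => ?_⟩
    rcases Nat.eq_zero_or_pos j with rfl | hj0
    · exact hdl_get 0 (by omega)
    · have := htl_get (j-1) (by omega)
      rw [show pos + 1 + (j-1) = pos + j by omega, show j - 1 + 1 = j by omega] at this
      exact this
  refine ⟨⟨q, hqne, hub_q⟩, ?_⟩
  rcases lt_or_gt_of_ne hqne with hlt | hgt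
  · exact Or.inr ⟨q, hub_q, hlt⟩
  · left
    have h1 : pos + 1 + (L - 2) < n := by omega
    have h2 : q + (L - 2) < n := by omega
    refine ⟨q, L - 2, h1, h2, hub_q, fun heq => ?_⟩
    apply habs
    apply infix_iff_occursAt.mpr ⟨pos, ?_⟩
    rw [occursAt_iff_getElem]
    refine ⟨by omega, fun j hj => ?_⟩
    rcases lt_or_ge j (L-1) with hjL | hjL
    · exact hdl_get j hjL
    · have hjeq : j = L - 1 := by omega
      rw [hjeq]
      have := htl_get (L-2) (by omega)
      rw [show L - 2 + 1 = L - 1 by omega] at this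
      rw [← this, List.getElem?_eq_getElem (by omega : pos + (L-1) < x.length),
        List.getElem?_eq_getElem (by omega : q + (L-2) < x.length)]
      congr 1
      convert heq using 2
      omega

lemma backward (x : List α) (a b : α) (u : List α) (pos : ℕ)
    (hpos : OccursAt x (a :: (u ++ [b])) pos)
    (huniq : ∀ q, OccursAt x (a :: (u ++ [b])) q → q = pos)
    (hrhs : (∃ p : ℕ, p ≠ pos + 1 ∧ OccursAt x (u ++ [b]) p) ∧
      ((∃ (p ℓ : ℕ) (h1 : pos + 1 + ℓ < x.length) (h2 : p + ℓ < x.length),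
          OccursAt x (u ++ [b]) p ∧ x[pos + 1 + ℓ]'h1 ≠ x[p + ℓ]'h2) ∨
       (∃ p : ℕ, OccursAt x (u ++ [b]) p ∧ p < pos + 1))) :
    ∃ m : List α, IsMAW x m ∧ (a :: (u ++ [b])) <+: m := by
  classical
  set n := x.length with hn
  obtain ⟨hxlen, hxel⟩ := occursAt_iff_getElem.mp hpos
  simp only [List.length_cons, List.length_append, List.length_singleton] at hxlen
  have hub_el : ∀ j < u.length + 1, x[pos+1+j]? = (u ++ [b])[j]? := by
    intro j hj
    have := hxel (j+1) (by simp; omega)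
    rw [show pos + (j+1) = pos+1+j by omega] at this
    simpa using this
  obtain ⟨hcase1, hcase2⟩ := hrhs
  by_cases hi : (∃ (p ℓ : ℕ) (h1 : pos + 1 + ℓ < x.length) (h2 : p + ℓ < x.length),
      OccursAt x (u ++ [b]) p ∧ x[pos + 1 + ℓ]'h1 ≠ x[p + ℓ]'h2)
  · obtain ⟨p, ℓ0, h1, h2, hoccp, hne0⟩ := hi
    obtain ⟨hplen, hpel⟩ := occursAt_iff_getElem.mp hoccp
    simp only [List.length_append, List.length_singleton] at hplen
    have hPex : ∃ ℓ, ∃ (h1 : pos + 1 + ℓ < x.length) (h2 : p + ℓ < x.length),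
        x[pos + 1 + ℓ]'h1 ≠ x[p + ℓ]'h2 := ⟨ℓ0, h1, h2, hne0⟩
    set ℓ := Nat.find hPex with hℓdef
    obtain ⟨hf1, hf2, hfne⟩ := Nat.find_spec hPex
    have hℓge : u.length + 1 ≤ ℓ := by
      by_contra h
      push_neg at h
      apply hfne
      have e1 := hub_el ℓ (by omega)
      have e2 := hpel ℓ (by simp; omega)
      rw [List.getElem?_eq_getElem hf1] at e1
      rw [List.getElem?_eq_getElem hf2] at e2
      rw [← e2] at e1
      exact Option.some_inj.mp e1
    have hagree : ∀ j < ℓ, x[pos+1+j]? = x[p+j]? := by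
      intro j hj
      have hb1 : pos + 1 + j < n := by omega
      have hb2 : p + j < n := by omega
      have hmin := Nat.find_min hPex hj
      push_neg at hmin
      rw [List.getElem?_eq_getElem hb1, List.getElem?_eq_getElem hb2]
      exact congrArg some (hmin hb1 hb2)
    exact construct x a b u pos p ℓ hpos huniq hℓge (le_of_lt hf1) hf2 hagree
      (fun h1' heq => hfne heq)
  · -- no mismatch anywhere; use case (ii)
    rcases hcase2 with h | h
    · exact absurd h hi
    obtain ⟨p, hoccp, hplt⟩ := h
    push_neg at hi
    set ℓ := n - (pos + 1) with hℓdef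
    have hend : pos + 1 + ℓ = n := by omega
    have hp : p + ℓ < n := by omega
    have hagree : ∀ j < ℓ, x[pos+1+j]? = x[p+j]? := by
      intro j hj
      have hb1 : pos + 1 + j < n := by omega
      have hb2 : p + j < n := by omega
      rw [List.getElem?_eq_getElem hb1, List.getElem?_eq_getElem hb2]
      exact congrArg some (hi p j hb1 hb2 hoccp)
    exact construct x a b u pos p ℓ hpos huniq (by omega) (by omega) hp hagree
      (fun h1' => absurd h1' (by omega))

end Helpers

/-- let `aub` be a factor occurring exactly once in `x`, at
position `pos` (so `ub` occurs at position `pos + 1`). Then `aub` is a prefix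
of some minimal absent word of `x` if and only if `ub` occurs at least twice
in `x` and, moreover, either (i) some occurrence of `ub` at position `p` has a
right extension differing from that of the occurrence at `pos + 1` at some
offset `ℓ`, or (ii) the occurrence of `ub` at `pos + 1` is not its first
occurrence in `x`. -/
theorem maw_prefix_characterisation {α : Type*} (x : List α) (a b : α) (u : List α)
    (pos : ℕ) (hpos : OccursAt x (a :: (u ++ [b])) pos)
    (huniq : ∃! p : ℕ, OccursAt x (a :: (u ++ [b])) p) :
    (∃ m : List α, IsMAW x m ∧ (a :: (u ++ [b])) <+: m) ↔
      ((∃ p : ℕ, p ≠ pos + 1 ∧ OccursAt x (u ++ [b]) p) ∧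
        ((∃ (p ℓ : ℕ) (h1 : pos + 1 + ℓ < x.length) (h2 : p + ℓ < x.length),
            OccursAt x (u ++ [b]) p ∧ x[pos + 1 + ℓ]'h1 ≠ x[p + ℓ]'h2) ∨
         (∃ p : ℕ, OccursAt x (u ++ [b]) p ∧ p < pos + 1))) := by
  have huniq' : ∀ q, OccursAt x (a :: (u ++ [b])) q → q = pos := by
    obtain ⟨p0, hp0, hu⟩ := huniq
    exact fun q hq => (hu q hq).trans (hu pos hpos).symm
  constructor
  · rintro ⟨m, hmaw, hpre⟩
    exact forward x a b u pos hpos huniq' m hmaw hpre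
  · exact backward x a b u pos hpos huniq'
end

section
/- Let v be a factor of x occurring exactly once in x that is an infix of x, i.e., preceded by some letter a and followed by some letter b in x. Then avb is not a factor of any minimal absent word of x. -/
/-- Occurrence from a decomposition. -/
lemma occursAt_of_eq {α : Type*} {x P v Q : List α} (h : x = P ++ (v ++ Q)) :
    OccursAt x v P.length := by
  constructor
  · subst h; simp only [List.length_append]; omega
  · subst h; rw [List.drop_left]; exact List.prefix_append v Q

/-- if `v` is a factor of `x` occurring exactly once in `x`,
whose occurrence is preceded by the letter `a` and followed by the letter `b`
(i.e. `x = s · a · v · b · t`), then `a v b` is not a factor of any minimal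
absent word of `x`. -/
theorem unique_infix_extension_not_in_maw {α : Type*} (x v : List α) (a b : α)
    (s t : List α) (hx : x = s ++ a :: (v ++ b :: t))
    (huniq : ∃! i : ℕ, OccursAt x v i) :
    ∀ m : List α, IsMAW x m → ¬ (a :: (v ++ [b])) <:+: m := by
  rintro m ⟨hm1, hm2⟩ ⟨l, r, hlr⟩
  obtain ⟨i, -, hi⟩ := huniq
  have hocc0 : OccursAt x v (s.length + 1) := by
    simpa using occursAt_of_eq (P := s ++ [a]) (Q := b :: t) (x := x) (by simp [hx])
  -- Claim A : l ++ a :: v is a proper factor of m, hence occurs in x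
  have hA : l ++ a :: v <:+: x := by
    apply hm2
    · exact ⟨[], b :: r, by simp [← hlr]⟩
    · intro h
      apply_fun List.length at h
      simp [← hlr] at h
  obtain ⟨p, q, hpq⟩ := hA
  have hoccA : OccursAt x v (p.length + l.length + 1) := by
    simpa [Nat.add_assoc] using occursAt_of_eq (P := p ++ l ++ [a]) (Q := q) (x := x) (by simp [← hpq])
  have hlenA : p.length + l.length = s.length := by
    have := (hi _ hoccA).trans (hi _ hocc0).symm
    omega
  have hsl : s = p ++ l ∧ (a :: (v ++ b :: t)) = a :: v ++ q := by
    have := List.append_inj (by rw [← hx, ← hpq]; simp : s ++ (a :: (v ++ b :: t)) = (p ++ l) ++ (a :: v ++ q)) (by simp; omega)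
    simpa using this
  -- Claim B : v ++ b :: r is a proper factor of m, hence occurs in x
  have hB : v ++ b :: r <:+: x := by
    apply hm2
    · exact ⟨l ++ [a], [], by simp [← hlr]⟩
    · intro h
      apply_fun List.length at h
      simp [← hlr] at h
      omega
  obtain ⟨p', q', hpq'⟩ := hB
  have hoccB : OccursAt x v p'.length :=
    occursAt_of_eq (P := p') (Q := b :: r ++ q') (by simp [← hpq'])
  have hlenB : p'.length = s.length + 1 := (hi _ hoccB).trans (hi _ hocc0).symm
  have hsr : p' = s ++ [a] ∧ v ++ (b :: r ++ q') = v ++ b :: t := by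
    have e1 : p' ++ (v ++ (b :: r ++ q')) = (s ++ [a]) ++ (v ++ b :: t) := by
      calc p' ++ (v ++ (b :: r ++ q')) = p' ++ (v ++ b :: r) ++ q' := by simp
        _ = x := hpq'
        _ = (s ++ [a]) ++ (v ++ b :: t) := by simp [hx]
    have := List.append_inj e1 (by simp; omega)
    simpa using this
  have ht : r ++ q' = t := by
    have := hsr.2
    simpa using this
  apply hm1
  exact ⟨p, q', by rw [hx, hsl.1, ← ht, ← hlr]; simp⟩
end
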